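/- arXiv:1609.00322 — 4 statements merged into one kernel-verified Lean document; each statement's English description precedes it below -/
import Mathlib

section
/- Plotkin's weak call-by-value beta-reduction →βv on (possibly open) lambda-terms is strongly confluent: if t →βv u and t →βv s with u ≠ s, then there exists r such that u →βv r and s →βv r. -/
/-- λ-terms in de Bruijn notation: variables, abstractions, applications. -/
inductive Tm : Type
  | var : Nat → Tm
  | lam : Tm → Tm
  | app : Tm → Tm → Tm

namespace Tm

/-- Shift (by one) the free de Bruijn indices `≥ k`. -/
def shift (k : Nat) : Tm → Tm
  | var n => if k ≤ n then var (n+1) else var n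
  | lam t => lam (shift (k+1) t)
  | app t u => app (shift k t) (shift k u)

/-- Capture-avoiding substitution of `u` for the free variable `k` in a term. -/
def subst : Tm → Nat → Tm → Tm
  | var n, k, u => if n = k then u else if k < n then var (n-1) else var n
  | lam t, k, u => lam (subst t (k+1) (shift 0 u))
  | app t s, k, u => app (subst t k u) (subst s k u)

/-- Values: variables and abstractions. -/
inductive IsValue : Tm → Prop
  | var : IsValue (var n)
  | lam : IsValue (lam t)

end Tm
open Tm

/-- Plotkin's weak call-by-value β-reduction: the root rule `(λx.t)v ↦ t[x:=v]`
(`v` a value), closed under applicative contexts (no reduction under λ). -/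
inductive StepBV : Tm → Tm → Prop
  | beta : IsValue v → StepBV (.app (.lam t) v) (subst t 0 v)
  | appL : StepBV t t' → StepBV (.app t u) (.app t' u)
  | appR : StepBV u u' → StepBV (.app t u) (.app t u')


lemma value_no_step {v w : Tm} (hv : IsValue v) (h : StepBV v w) : False := by
  cases hv <;> cases h

/-- `→βv` is strongly confluent. -/
theorem betav_strongly_confluent (t u s : Tm)
    (h1 : StepBV t u) (h2 : StepBV t s) (hne : u ≠ s) :
    ∃ r, StepBV u r ∧ StepBV s r := by
  induction h1 generalizing s with
  | @beta v t hv =>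
    cases h2 with
    | beta hv' => exact absurd rfl hne
    | appL h => cases h
    | appR h => exact absurd h (fun h => value_no_step hv h)
  | @appL a a' b h ih =>
    cases h2 with
    | beta hv' => cases h
    | @appL _ a'' _ h' =>
      by_cases he : a' = a''
      · subst he; exact absurd rfl hne
      · obtain ⟨r, hr1, hr2⟩ := ih _ h' he
        exact ⟨.app r b, .appL hr1, .appL hr2⟩
    | @appR _ b' _ h' =>
      exact ⟨.app a' b', .appR h', .appL h⟩
  | @appR b b' a h ih =>
    cases h2 with
    | beta hv' => exact absurd h (fun h => value_no_step hv' h)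
    | @appL _ a' _ h' =>
      exact ⟨.app a' b', .appL h', .appR h⟩
    | @appR _ b'' _ h' =>
      by_cases he : b' = b''
      · subst he; exact absurd rfl hne
      · obtain ⟨r, hr1, hr2⟩ := ih _ h' he
        exact ⟨.app a r, .appR hr1, .appR hr2⟩
end

section
/- In the value substitution calculus, the multiplicative reduction →m and the exponential reduction →e strongly commute: if u ←e t →m s then u ≠ s and there exists r with u →m r and s →e r. -/
/-- Terms of the value substitution calculus, in de Bruijn notation:
variables, abstractions, applications and explicit substitutions
(`sub t u` is `t[x←u]`, binding de Bruijn index 0 of `t`). -/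
inductive VTm : Type
  | var : Nat → VTm
  | lam : VTm → VTm
  | app : VTm → VTm → VTm
  | sub : VTm → VTm → VTm

namespace VTm

/-- Shift (by one) the free de Bruijn indices `≥ k`. -/
def shift (k : Nat) : VTm → VTm
  | var n => if k ≤ n then var (n+1) else var n
  | lam t => lam (shift (k+1) t)
  | app t u => app (shift k t) (shift k u)
  | sub t u => sub (shift (k+1) t) (shift k u)

/-- Capture-avoiding (meta-level) substitution of `u` for variable `k`. -/
def subst : VTm → Nat → VTm → VTm
  | var n, k, u => if n = k then u else if k < n then var (n-1) else var n
  | lam t, k, u => lam (subst t (k+1) (shift 0 u))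
  | app t s, k, u => app (subst t k u) (subst s k u)
  | sub t s, k, u => sub (subst t (k+1) (shift 0 u)) (subst s k u)

/-- vsub-values: variables and abstractions. -/
inductive IsVal : VTm → Prop
  | var : IsVal (var n)
  | lam : IsVal (lam t)

/-- Multiplicative root rule `L⟨λx.t⟩u ↦m L⟨t[x←u]⟩` (the recursion on the
substitution context `L` performs the de Bruijn shifts corresponding to the
side condition that the variables bound by `L` do not occur free in `u`). -/
inductive RootM : VTm → VTm → Prop
  | beta : RootM (app (lam t) u) (sub t u)
  | under : RootM (app t (shift 0 u)) s → RootM (app (sub t r) u) (sub s r)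

/-- Exponential root rule `t[x←L⟨v⟩] ↦e L⟨t{x:=v}⟩` for an abstraction `v`. -/
inductive RootEAbs : VTm → VTm → Prop
  | beta : RootEAbs (sub t (lam u)) (subst t 0 (lam u))
  | under : RootEAbs (sub (shift 1 t) b) s → RootEAbs (sub t (sub b r)) (sub s r)

/-- Exponential root rule `t[x←L⟨v⟩] ↦e L⟨t{x:=v}⟩` for a variable `v`. -/
inductive RootEVar : VTm → VTm → Prop
  | beta : RootEVar (sub t (var n)) (subst t 0 (var n))
  | under : RootEVar (sub (shift 1 t) b) s → RootEVar (sub t (sub b r)) (sub s r)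

/-- Closure of a root rule under the weak evaluation contexts
`E ::= ⟨·⟩ | t E | E t | E[x←u] | t[x←E]`. -/
inductive Clo (R : VTm → VTm → Prop) : VTm → VTm → Prop
  | root : R t u → Clo R t u
  | appL : Clo R t t' → Clo R (app t u) (app t' u)
  | appR : Clo R u u' → Clo R (app t u) (app t u')
  | subL : Clo R t t' → Clo R (sub t u) (sub t' u)
  | subR : Clo R u u' → Clo R (sub t u) (sub t u')

/-- Multiplicative reduction `→m`. -/
def StepM : VTm → VTm → Prop := Clo RootM
/-- Abstraction-exponential reduction `→eλ`. -/
def StepEAbs : VTm → VTm → Prop := Clo RootEAbs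
/-- Variable-exponential reduction `→evar`. -/
def StepEVar : VTm → VTm → Prop := Clo RootEVar
/-- Exponential reduction `→e = →eλ ∪ →evar`. -/
def StepE (t u : VTm) : Prop := StepEAbs t u ∨ StepEVar t u
/-- vsub-reduction `→vsub = →m ∪ →e`. -/
def StepVsub (t u : VTm) : Prop := StepM t u ∨ StepE t u

/-- Swap the de Bruijn indices `k` and `k+1`. -/
def swap (k : Nat) : VTm → VTm
  | var n => if n = k then var (k+1) else if n = k+1 then var k else var n
  | lam t => lam (swap (k+1) t)
  | app t u => app (swap k t) (swap k u)
  | sub t u => sub (swap (k+1) t) (swap k u)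

/-- Structural equivalence `≡`: least equivalence relation closed under
evaluation contexts generated by the four permutation axioms for explicit
substitutions (the de Bruijn shifts/swaps implement the freshness side
conditions). -/
inductive SEq : VTm → VTm → Prop
  | com : SEq (sub (sub t (shift 0 s)) u) (sub (sub (swap 0 t) (shift 0 u)) s)
  | apR : SEq (app t (sub s u)) (sub (app (shift 0 t) s) u)
  | apL : SEq (app (sub t u) s) (sub (app t (shift 0 s)) u)
  | es  : SEq (sub t (sub u s)) (sub (sub (shift 1 t) u) s)
  | refl : SEq t t
  | symm : SEq t u → SEq u t
  | trans : SEq t u → SEq u s → SEq t s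
  | appL : SEq t t' → SEq (app t u) (app t' u)
  | appR : SEq u u' → SEq (app t u) (app t u')
  | subL : SEq t t' → SEq (sub t u) (sub t' u)
  | subR : SEq u u' → SEq (sub t u) (sub t u')

/-- Terms without explicit substitutions. -/
def NoES : VTm → Prop
  | var _ => True
  | lam t => NoES t
  | app t u => NoES t ∧ NoES u
  | sub _ _ => False

end VTm
open VTm

/-! The weight in which values count 2, applications add and explicit substitutions multiply
is strictly decreased by `→e` and weakly increased by `→m`, so the two ends of a peak differ.
Closing the peak reduces to the root cases, since steps in disjoint positions commute and
steps in the same position are handled by induction. The only real overlap is an `→m`-redex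
`L⟨λx.t⟩u` whose substitution context `L` contains the substitution fired by `→e`; it is
resolved by induction on `L`. -/

namespace VTm

theorem shift_shift {i j : Nat} (h : i ≤ j) (t : VTm) :
    shift (j+1) (shift i t) = shift i (shift j t) := by
  induction t generalizing i j with
  | var n =>
    simp only [shift]
    split_ifs <;> simp only [shift] <;> split_ifs <;> first | rfl | omega
  | lam t ih => simp [shift, ih (by omega : i+1 ≤ j+1)]
  | app t u iht ihu => simp [shift, iht h, ihu h]
  | sub t u iht ihu => simp [shift, iht (by omega : i+1 ≤ j+1), ihu h]

theorem subst_shift_self (t : VTm) (n : Nat) (v : VTm) : subst (shift n t) n v = t := by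
  induction t generalizing n v with
  | var m =>
    simp only [shift]
    split_ifs with h <;> simp only [subst] <;> split_ifs <;> first | rfl | omega
  | lam t ih => simp [shift, subst, ih]
  | app t u iht ihu => simp [shift, subst, iht, ihu]
  | sub t u iht ihu => simp [shift, subst, iht, ihu]

theorem shift_subst_of_le {j k : Nat} (h : j ≤ k) (t v : VTm) :
    shift j (subst t k v) = subst (shift j t) (k+1) (shift j v) := by
  induction t generalizing j k v with
  | var m =>
    simp only [subst, shift]
    split_ifs <;> simp only [subst, shift] <;> split_ifs <;>
      first | rfl | omega | (congr 1; omega)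
  | lam t ih =>
    simp only [subst, shift, lam.injEq]
    rw [ih (by omega : j+1 ≤ k+1), shift_shift (Nat.zero_le j)]
  | app t u iht ihu => simp [subst, shift, iht h, ihu h]
  | sub t u iht ihu =>
    simp only [subst, shift, sub.injEq]
    rw [iht (by omega : j+1 ≤ k+1), shift_shift (Nat.zero_le j), ihu h]
    exact ⟨rfl, rfl⟩

theorem shift_subst_of_ge {n k : Nat} (h : n ≤ k) (t v : VTm) :
    shift k (subst t n v) = subst (shift (k+1) t) n (shift k v) := by
  induction t generalizing n k v with
  | var m =>
    simp only [subst, shift]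
    split_ifs <;> simp only [subst, shift] <;> split_ifs <;>
      first | rfl | omega | (congr 1; omega)
  | lam t ih =>
    simp only [subst, shift, lam.injEq]
    rw [ih (by omega : n+1 ≤ k+1), shift_shift (Nat.zero_le k)]
  | app t u iht ihu => simp [subst, shift, iht h, ihu h]
  | sub t u iht ihu =>
    simp only [subst, shift, sub.injEq]
    rw [iht (by omega : n+1 ≤ k+1), shift_shift (Nat.zero_le k), ihu h]
    exact ⟨rfl, rfl⟩

inductive RootE : VTm → VTm → Prop
  | beta : IsVal v → RootE (sub t v) (subst t 0 v)
  | under : RootE (sub (shift 1 t) b) s → RootE (sub t (sub b r)) (sub s r)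

theorem RootEAbs.rootE {t u : VTm} (h : RootEAbs t u) : RootE t u := by
  induction h with
  | beta => exact .beta .lam
  | under _ ih => exact .under ih

theorem RootEVar.rootE {t u : VTm} (h : RootEVar t u) : RootE t u := by
  induction h with
  | beta => exact .beta .var
  | under _ ih => exact .under ih

theorem RootE.rootEAbs_or_rootEVar {t u : VTm} (h : RootE t u) :
    RootEAbs t u ∨ RootEVar t u := by
  induction h with
  | beta hv =>
    cases hv
    · exact .inr .beta
    · exact .inl .beta
  | under _ ih => exact ih.imp .under .under

namespace Clo

variable {R S : VTm → VTm → Prop}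

theorem mono {R' : VTm → VTm → Prop} (hR : ∀ t u, R t u → R' t u) {t u : VTm}
    (h : Clo R t u) : Clo R' t u := by
  induction h with
  | root h => exact root (hR _ _ h)
  | appL _ ih => exact appL ih
  | appR _ ih => exact appR ih
  | subL _ ih => exact subL ih
  | subR _ ih => exact subR ih

theorem or_elim {t u : VTm} (h : Clo (fun t u => R t u ∨ S t u) t u) :
    Clo R t u ∨ Clo S t u := by
  induction h with
  | root h => exact h.imp root root
  | appL _ ih => exact ih.imp appL appL
  | appR _ ih => exact ih.imp appR appR
  | subL _ ih => exact ih.imp subL subL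
  | subR _ ih => exact ih.imp subR subR

theorem shift (hR : ∀ k t u, R t u → R (VTm.shift k t) (VTm.shift k u)) {t u : VTm}
    (h : Clo R t u) (k : Nat) : Clo R (VTm.shift k t) (VTm.shift k u) := by
  induction h generalizing k with
  | root h => exact root (hR k _ _ h)
  | appL _ ih => exact appL (ih k)
  | appR _ ih => exact appR (ih k)
  | subL _ ih => exact subL (ih (k+1))
  | subR _ ih => exact subR (ih k)

theorem subst (hR : ∀ k v t u, R t u → R (VTm.subst t k v) (VTm.subst u k v)) {t u : VTm}
    (h : Clo R t u) (k : Nat) (v : VTm) : Clo R (VTm.subst t k v) (VTm.subst u k v) := by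
  induction h generalizing k v with
  | root h => exact root (hR k v _ _ h)
  | appL _ ih => exact appL (ih k v)
  | appR _ ih => exact appR (ih k v)
  | subL _ ih => exact subL (ih (k+1) (VTm.shift 0 v))
  | subR _ ih => exact subR (ih k v)

end Clo

theorem stepE_iff {t u : VTm} : StepE t u ↔ Clo RootE t u := by
  constructor
  · rintro (h | h)
    · exact h.mono fun _ _ => RootEAbs.rootE
    · exact h.mono fun _ _ => RootEVar.rootE
  · intro h
    exact (h.mono fun _ _ => RootE.rootEAbs_or_rootEVar).or_elim

/-- Applications add and explicit substitutions multiply, so that `→m` turns `2 + w u` into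
`w t * w u` and `→e` turns `w t * 2` into `w t`. -/
def weight : VTm → Nat
  | var _ => 2
  | lam _ => 2
  | app t u => weight t + weight u
  | sub t u => weight t * weight u

theorem two_le_weight (t : VTm) : 2 ≤ weight t := by
  induction t with
  | var | lam => exact le_rfl
  | app t u iht _ => simp only [weight]; omega
  | sub t u iht ihu => simp only [weight]; nlinarith

theorem weight_shift (k : Nat) (t : VTm) : weight (shift k t) = weight t := by
  induction t generalizing k with
  | var n => simp only [shift]; split_ifs <;> rfl
  | lam t => rfl
  | app t u iht ihu => simp [shift, weight, iht, ihu]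
  | sub t u iht ihu => simp [shift, weight, iht, ihu]

theorem IsVal.weight_eq {v : VTm} (hv : IsVal v) : weight v = 2 := by
  cases hv <;> rfl

theorem weight_subst (t : VTm) (k : Nat) {v : VTm} (hv : weight v = 2) :
    weight (subst t k v) = weight t := by
  induction t generalizing k v with
  | var n => simp only [subst]; split_ifs <;> simp [weight, hv]
  | lam t => rfl
  | app t u iht ihu => simp [subst, weight, iht k hv, ihu k hv]
  | sub t u iht ihu =>
    simp [subst, weight, iht (k+1) ((weight_shift 0 v).trans hv), ihu k hv]

theorem RootM.weight_le {t s : VTm} (h : RootM t s) : weight t ≤ weight s := by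
  induction h with
  | @beta t u =>
    simp only [weight]
    nlinarith [two_le_weight t, two_le_weight u]
  | @under t u s r _ ih =>
    simp only [weight, weight_shift] at ih ⊢
    nlinarith [two_le_weight r, two_le_weight u]

theorem RootE.weight_lt {t s : VTm} (h : RootE t s) : weight s < weight t := by
  induction h with
  | @beta v t hv =>
    simp only [weight, weight_subst t 0 hv.weight_eq, hv.weight_eq]
    have := two_le_weight t
    omega
  | @under t b s r _ ih =>
    simp only [weight, weight_shift] at ih ⊢
    nlinarith [two_le_weight r]

theorem Clo.weight_le {R : VTm → VTm → Prop} (hR : ∀ t s, R t s → weight t ≤ weight s)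
    {t s : VTm} (h : Clo R t s) : weight t ≤ weight s := by
  induction h with
  | root h => exact hR _ _ h
  | appL _ ih | appR _ ih => simp only [weight]; omega
  | subL _ ih => exact Nat.mul_le_mul_right _ ih
  | subR _ ih => exact Nat.mul_le_mul_left _ ih

theorem Clo.weight_lt {R : VTm → VTm → Prop} (hR : ∀ t s, R t s → weight s < weight t)
    {t s : VTm} (h : Clo R t s) : weight s < weight t := by
  induction h with
  | root h => exact hR _ _ h
  | appL _ ih | appR _ ih => simp only [weight]; omega
  | @subL _ _ u _ ih =>
    exact Nat.mul_lt_mul_of_pos_right ih (zero_lt_two.trans_le (two_le_weight u))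
  | @subR _ _ t _ ih =>
    exact Nat.mul_lt_mul_of_pos_left ih (zero_lt_two.trans_le (two_le_weight t))

theorem RootM.shift {t s : VTm} (h : RootM t s) (k : Nat) :
    RootM (VTm.shift k t) (VTm.shift k s) := by
  induction h generalizing k with
  | beta => exact .beta
  | @under t u s r _ ih =>
    have := ih (k+1)
    simp only [VTm.shift, shift_shift (Nat.zero_le k)] at this ⊢
    exact .under this

theorem RootM.subst {t s : VTm} (h : RootM t s) (k : Nat) (v : VTm) :
    RootM (VTm.subst t k v) (VTm.subst s k v) := by
  induction h generalizing k v with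
  | beta => exact .beta
  | @under t u s r _ ih =>
    have := ih (k+1) (VTm.shift 0 v)
    simp only [VTm.subst, ← shift_subst_of_le (Nat.zero_le k)] at this ⊢
    exact .under this

theorem RootE.shift {t s : VTm} (h : RootE t s) (k : Nat) :
    RootE (VTm.shift k t) (VTm.shift k s) := by
  induction h generalizing k with
  | @beta v t hv =>
    rw [shift_subst_of_ge (Nat.zero_le k)]
    refine .beta ?_
    cases hv
    · simp only [VTm.shift]; split_ifs <;> exact .var
    · exact .lam
  | @under t b s r _ ih =>
    have := ih (k+1)
    simp only [VTm.shift, shift_shift (Nat.le_add_left 1 k)] at this ⊢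
    exact .under this

/-- The critical pair: the explicit substitution fired by `→e` belongs to the substitution
context of the `→m`-redex. -/
theorem RootE.commute_rootM_of_sub {a b c s₀ s₁ : VTm} (hE : RootE (sub (VTm.shift 1 a) c) s₁)
    (hM : RootM (app a (VTm.shift 0 b)) s₀) :
    ∃ r, RootM (app s₁ (VTm.shift 0 b)) r ∧ RootE (sub (VTm.shift 1 s₀) c) r := by
  generalize hx : sub (VTm.shift 1 a) c = x at hE
  induction hE generalizing a b c s₀ with
  | @beta v t hv =>
    obtain ⟨rfl, rfl⟩ := sub.inj hx
    refine ⟨_, ?_, .beta hv⟩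
    have := (hM.shift 1).subst 0 c
    simpa only [VTm.shift, VTm.subst, shift_shift (Nat.zero_le 0) b, subst_shift_self] using this
  | @under t b₁ s r _ ih =>
    obtain ⟨rfl, rfl⟩ := sub.inj hx
    have hM' := hM.shift 1
    simp only [VTm.shift, shift_shift (Nat.zero_le 0) b] at hM'
    obtain ⟨r', hm, he⟩ := ih hM' rfl
    exact ⟨sub r' r, .under hm, .under he⟩

theorem RootM.commute_cloE {t s u : VTm} (hM : RootM t s) (hE : Clo RootE t u) :
    ∃ r, RootM u r ∧ Clo RootE s r := by
  induction hM generalizing u with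
  | beta =>
    cases hE with
    | root h => cases h
    | appL h => cases h with | root h => cases h
    | appR h => exact ⟨_, .beta, .subR h⟩
  | @under a b s₀ c hM₀ ih =>
    cases hE with
    | root h => cases h
    | appR h =>
      obtain ⟨r, hm, he⟩ := ih (.appR (h.shift (fun k _ _ h => h.shift k) 0))
      exact ⟨_, .under hm, .subL he⟩
    | appL h =>
      cases h with
      | root h =>
        cases h with
        | beta hv =>
          refine ⟨_, ?_, .root (.beta hv)⟩
          simpa only [VTm.subst, subst_shift_self] using hM₀.subst 0 c
        | under h =>
          obtain ⟨r, hm, he⟩ := h.commute_rootM_of_sub hM₀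
          exact ⟨_, .under hm, .root (.under he)⟩
      | subL h =>
        obtain ⟨r, hm, he⟩ := ih (.appL h)
        exact ⟨_, .under hm, .subL he⟩
      | subR h => exact ⟨_, .under hM₀, .subR h⟩

theorem RootE.commute_cloM {t u s : VTm} (hE : RootE t u) (hM : Clo RootM t s) :
    ∃ r, Clo RootM u r ∧ RootE s r := by
  induction hE generalizing s with
  | @beta v a hv =>
    cases hM with
    | root h => cases h
    | subL h => exact ⟨_, h.subst (fun k v _ _ h => h.subst k v) 0 v, .beta hv⟩
    | subR h => cases hv <;> cases h with | root h => cases h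
  | @under a b s₀ c hE₀ ih =>
    cases hM with
    | root h => cases h
    | subL h =>
      obtain ⟨r, hm, he⟩ := ih (.subL (h.shift (fun k _ _ h => h.shift k) 1))
      exact ⟨_, .subL hm, .under he⟩
    | subR h =>
      cases h with
      | root h => cases h
      | subL h =>
        obtain ⟨r, hm, he⟩ := ih (.subR h)
        exact ⟨_, .subL hm, .under he⟩
      | subR h => exact ⟨_, .subR h, .under hE₀⟩

theorem Clo.commute {R S : VTm → VTm → Prop}
    (hR : ∀ {t u s}, R t u → Clo S t s → ∃ r, Clo S u r ∧ Clo R s r)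
    (hS : ∀ {t u s}, Clo R t u → S t s → ∃ r, Clo S u r ∧ Clo R s r)
    {t u s : VTm} (hR' : Clo R t u) (hS' : Clo S t s) : ∃ r, Clo S u r ∧ Clo R s r := by
  induction hR' generalizing s with
  | root h => exact hR h hS'
  | appL h ih =>
    cases hS' with
    | root h' => exact hS (.appL h) h'
    | appL h' => obtain ⟨r, hs, hr⟩ := ih h'; exact ⟨_, .appL hs, .appL hr⟩
    | appR h' => exact ⟨_, .appR h', .appL h⟩
  | appR h ih =>
    cases hS' with
    | root h' => exact hS (.appR h) h'
    | appL h' => exact ⟨_, .appL h', .appR h⟩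
    | appR h' => obtain ⟨r, hs, hr⟩ := ih h'; exact ⟨_, .appR hs, .appR hr⟩
  | subL h ih =>
    cases hS' with
    | root h' => exact hS (.subL h) h'
    | subL h' => obtain ⟨r, hs, hr⟩ := ih h'; exact ⟨_, .subL hs, .subL hr⟩
    | subR h' => exact ⟨_, .subR h', .subL h⟩
  | subR h ih =>
    cases hS' with
    | root h' => exact hS (.subR h) h'
    | subL h' => exact ⟨_, .subL h', .subR h⟩
    | subR h' => obtain ⟨r, hs, hr⟩ := ih h'; exact ⟨_, .subR hs, .subR hr⟩

end VTm

/-- `→m` and `→e` strongly commute. -/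
theorem m_e_strongly_commute (t u s : VTm)
    (he : StepE t u) (hm : StepM t s) :
    u ≠ s ∧ ∃ r, StepM u r ∧ StepE s r := by
  rw [stepE_iff] at he
  constructor
  · rintro rfl
    have hlt : weight u < weight t := he.weight_lt fun _ _ => RootE.weight_lt
    have hle : weight t ≤ weight u := Clo.weight_le (fun _ _ => RootM.weight_le) hm
    omega
  · obtain ⟨r, hur, hsr⟩ := he.commute
      (fun hE hM => (hE.commute_cloM hM).imp fun _ ⟨hm, he⟩ => ⟨hm, .root he⟩)
      (fun hE hM => (hM.commute_cloE hE).imp fun _ ⟨hm, he⟩ => ⟨.root hm, he⟩) hm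
    exact ⟨r, hur, stepE_iff.2 hsr⟩
end

section
/- In the value substitution calculus, for every term t without explicit substitutions and every vsub-derivation d from t, the number of exponential steps in d is at most the number of multiplicative steps in d. -/
open VTm

/-- vsub-derivations counting multiplicative and exponential steps. -/
inductive DerivVsub : VTm → VTm → Nat → Nat → Prop
  | refl : DerivVsub t t 0 0
  | stepM : StepM t u → DerivVsub u s m e → DerivVsub t s (m+1) e
  | stepE : StepE t u → DerivVsub u s m e → DerivVsub t s m (e+1)

namespace VTm

/-- Number of explicit substitutions in a term. -/
def nES : VTm → Nat
  | var _ => 0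
  | lam t => nES t
  | app t u => nES t + nES u
  | sub t u => nES t + nES u + 1

/-- Invariant: every abstraction body is ES-free. -/
def Good : VTm → Prop
  | var _ => True
  | lam t => NoES t
  | app t u => Good t ∧ Good u
  | sub t u => Good t ∧ Good u

lemma noES_good : ∀ t, NoES t → Good t := by
  intro t; induction t <;> simp_all [NoES, Good]

lemma noES_nES : ∀ t, NoES t → nES t = 0 := by
  intro t; induction t <;> simp_all [NoES, nES]

lemma shift_noES : ∀ t k, NoES (shift k t) ↔ NoES t := by
  intro t; induction t <;> intro k <;> simp_all [shift, NoES]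
  split <;> simp [NoES]

lemma shift_good : ∀ t k, Good (shift k t) ↔ Good t := by
  intro t; induction t <;> intro k <;> simp_all [shift, Good, shift_noES]
  split <;> simp [Good]

lemma shift_nES : ∀ t k, nES (shift k t) = nES t := by
  intro t; induction t <;> intro k <;> simp_all [shift, nES]
  split <;> simp [nES]

lemma subst_noES : ∀ t k v, NoES t → NoES v → NoES (subst t k v) := by
  intro t; induction t <;> intro k v ht hv <;>
    simp_all [subst, NoES, shift_noES]
  split
  · exact hv
  · split <;> simp [NoES]

lemma subst_good : ∀ t k v, Good t → NoES v → Good (subst t k v) := by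
  intro t; induction t <;> intro k v ht hv <;>
    simp_all [subst, Good, shift_noES, subst_noES]
  split
  · exact noES_good _ hv
  · split <;> simp [Good]

lemma subst_nES : ∀ t k v, NoES v → nES (subst t k v) = nES t := by
  intro t; induction t <;> intro k v hv <;>
    simp_all [subst, nES, shift_noES, noES_nES]
  split
  · exact noES_nES _ hv
  · split <;> simp [nES]

lemma rootM_inv {a b : VTm} (h : RootM a b) (hg : Good a) :
    Good b ∧ nES b = nES a + 1 := by
  induction h with
  | beta =>
      obtain ⟨ht, hu⟩ := hg
      exact ⟨⟨noES_good _ ht, hu⟩, by simp [nES]⟩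
  | @under t u s r h ih =>
      obtain ⟨⟨ht, hr⟩, hu⟩ := hg
      obtain ⟨hs, hn⟩ := ih ⟨ht, (shift_good u 0).2 hu⟩
      refine ⟨⟨hs, hr⟩, ?_⟩
      simp only [nES, shift_nES] at hn ⊢
      omega

lemma rootEAbs_inv {a b : VTm} (h : RootEAbs a b) (hg : Good a) :
    Good b ∧ nES b + 1 = nES a := by
  induction h with
  | @beta t u =>
      obtain ⟨ht, hu⟩ := hg
      refine ⟨subst_good _ _ _ ht hu, ?_⟩
      simp [nES, subst_nES t 0 (lam u) hu, noES_nES u hu]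
  | @under t b r s h ih =>
      obtain ⟨ht, hb, hr⟩ := hg
      obtain ⟨hs, hn⟩ := ih ⟨(shift_good t 1).2 ht, hb⟩
      refine ⟨⟨hs, hr⟩, ?_⟩
      simp only [nES, shift_nES] at hn ⊢
      omega

lemma rootEVar_inv {a b : VTm} (h : RootEVar a b) (hg : Good a) :
    Good b ∧ nES b + 1 = nES a := by
  induction h with
  | @beta t n =>
      obtain ⟨ht, _⟩ := hg
      refine ⟨subst_good _ _ _ ht trivial, ?_⟩
      simp [nES, subst_nES t 0 (var n) trivial]
  | @under t b r s h ih =>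
      obtain ⟨ht, hb, hr⟩ := hg
      obtain ⟨hs, hn⟩ := ih ⟨(shift_good t 1).2 ht, hb⟩
      refine ⟨⟨hs, hr⟩, ?_⟩
      simp only [nES, shift_nES] at hn ⊢
      omega

lemma clo_inv {R : VTm → VTm → Prop} {k l : Nat}
    (hR : ∀ a b, R a b → Good a → Good b ∧ nES b + k = nES a + l)
    {a b : VTm} (h : Clo R a b) (hg : Good a) :
    Good b ∧ nES b + k = nES a + l := by
  induction h with
  | root h => exact hR _ _ h hg
  | appL h ih =>
      obtain ⟨h1, h2⟩ := hg
      obtain ⟨hg', hn⟩ := ih h1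
      exact ⟨⟨hg', h2⟩, by simp only [nES] at hn ⊢; omega⟩
  | appR h ih =>
      obtain ⟨h1, h2⟩ := hg
      obtain ⟨hg', hn⟩ := ih h2
      exact ⟨⟨h1, hg'⟩, by simp only [nES] at hn ⊢; omega⟩
  | subL h ih =>
      obtain ⟨h1, h2⟩ := hg
      obtain ⟨hg', hn⟩ := ih h1
      exact ⟨⟨hg', h2⟩, by simp only [nES] at hn ⊢; omega⟩
  | subR h ih =>
      obtain ⟨h1, h2⟩ := hg
      obtain ⟨hg', hn⟩ := ih h2
      exact ⟨⟨h1, hg'⟩, by simp only [nES] at hn ⊢; omega⟩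

lemma stepM_inv {a b : VTm} (h : StepM a b) (hg : Good a) :
    Good b ∧ nES b = nES a + 1 := by
  have := clo_inv (k := 0) (l := 1)
    (fun a b h hg => by simpa using rootM_inv h hg) h hg
  simpa using this

lemma stepE_inv {a b : VTm} (h : StepE a b) (hg : Good a) :
    Good b ∧ nES b + 1 = nES a := by
  rcases h with h | h
  · exact clo_inv (k := 1) (l := 0)
      (fun a b h hg => by simpa using rootEAbs_inv h hg) h hg
  · exact clo_inv (k := 1) (l := 0)
      (fun a b h hg => by simpa using rootEVar_inv h hg) h hg

end VTm

lemma vsubDeriv_inv {t u : VTm} {m e : Nat} (d : DerivVsub t u m e)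
    (hg : Good t) : Good u ∧ nES u + e = nES t + m := by
  induction d with
  | refl => exact ⟨hg, rfl⟩
  | stepM h _ ih =>
      obtain ⟨hg', hn⟩ := stepM_inv h hg
      obtain ⟨hg'', hn'⟩ := ih hg'
      exact ⟨hg'', by omega⟩
  | stepE h _ ih =>
      rcases h with h
      obtain ⟨hg', hn⟩ := stepE_inv h hg
      obtain ⟨hg'', hn'⟩ := ih hg'
      exact ⟨hg'', by omega⟩

/-- from an ES-free term, any vsub-derivation performs at most
as many exponential steps as multiplicative steps. -/
theorem exp_steps_le_mult_steps (t u : VTm) (m e : Nat)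
    (ht : NoES t) (d : DerivVsub t u m e) : e ≤ m := by
  obtain ⟨_, hn⟩ := vsubDeriv_inv d (noES_good t ht)
  have h0 := noES_nES t ht
  omega
end

section
/- If an ES-free term t is normal for the shuffling calculus (both balanced βv and shuffling steps), then its multiplicative normal form mnf(t) is vsub-normal in the value substitution calculus. -/
open VTm

/-- Root shuffling rules: `((λx.t)u)s ↦σ1 (λx.(t s))u` (`x ∉ fv s`) and
`v((λx.s)u) ↦σ3 (λx.(v s))u` (`x ∉ fv v`, `v` a value); the freshness side
conditions are implemented by the de Bruijn shift. -/
inductive RootSig : VTm → VTm → Prop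
  | sig1 : RootSig (.app (.app (.lam t) u) s) (.app (.lam (.app t (shift 0 s))) u)
  | sig3 : IsVal v → RootSig (.app v (.app (.lam s) u)) (.app (.lam (.app (shift 0 v) s)) u)

/-- Root βv rule: `(λx.t)v ↦ t{x:=v}` for `v` a value. -/
inductive RootBV : VTm → VTm → Prop
  | beta : IsVal v → RootBV (.app (.lam t) v) (subst t 0 v)

/-- Closure under balanced contexts `B ::= ⟨·⟩ | t B | B t | (λx.B)t`. -/
inductive BClo (R : VTm → VTm → Prop) : VTm → VTm → Prop
  | root : R t u → BClo R t u
  | appL : BClo R t t' → BClo R (.app t u) (.app t' u)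
  | appR : BClo R u u' → BClo R (.app t u) (.app t u')
  | lamApp : BClo R t t' → BClo R (.app (.lam t) u) (.app (.lam t') u)

/-- Shuffling steps `→σ` (balanced closure of σ1 ∪ σ3). -/
def StepSig : VTm → VTm → Prop := BClo RootSig
/-- Balanced βv steps. -/
def StepBVb : VTm → VTm → Prop := BClo RootBV

/-- `mt` is the m-normal form of `t`. -/
def MNF (t mt : VTm) : Prop :=
  Relation.ReflTransGen StepM t mt ∧ ∀ u, ¬ StepM mt u


namespace ShufAux
open VTm

/-- Combined grammar: `Is true` = vsub-inert terms, `Is false` = vsub-normal-ish. -/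
inductive Is : Bool → VTm → Prop
  | varVal {k v} : IsVal v → Is true (.app (.var k) v)
  | varI {k i} : Is true i → Is true (.app (.var k) i)
  | appN {i n} : Is true i → Is false n → Is true (.app i n)
  | var {k} : Is false (.var k)
  | lam {t} : Is false (.lam t)
  | inert {i} : Is true i → Is false i
  | redex {t i} : Is false t → Is true i → Is false (.app (.lam t) i)
  | essub {t i} : Is false t → Is true i → Is false (.sub t i)

theorem is_true_app {t : VTm} (h : Is true t) : ∃ a b, t = .app a b := by
  cases h <;> exact ⟨_, _, rfl⟩

theorem clo_of_var {R : VTm → VTm → Prop} {n u} (h : Clo R (.var n) u) : R (.var n) u := by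
  cases h; assumption

theorem clo_of_lam {R : VTm → VTm → Prop} {s u} (h : Clo R (.lam s) u) : R (.lam s) u := by
  cases h; assumption

theorem clo_of_val {R : VTm → VTm → Prop} {v u} (hv : IsVal v) (h : Clo R v u) : R v u := by
  cases hv
  · exact clo_of_var h
  · exact clo_of_lam h

/-- Preservation of the grammar under multiplicative steps. -/
theorem pres : ∀ {b t t'}, Is b t → StepM t t' → Is b t' := by
  intro b t t' h
  induction h generalizing t' with
  | varVal hv =>
    intro hs; exfalso
    cases hs with
    | root hr => cases hr
    | appL hl => cases clo_of_var hl
    | appR hr =>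
      have := clo_of_val hv hr
      cases hv <;> cases this
  | varI hi ih =>
    intro hs
    cases hs with
    | root hr => cases hr
    | appL hl => cases clo_of_var hl
    | appR hr => exact Is.varI (ih hr)
  | appN hi hn ihI ihN =>
    intro hs
    obtain ⟨a, c, rfl⟩ := is_true_app hi
    cases hs with
    | root hr => cases hr
    | appL hl => exact Is.appN (ihI hl) hn
    | appR hr => exact Is.appN hi (ihN hr)
  | var => intro hs; exact absurd (clo_of_var hs) (by rintro ⟨⟩)
  | lam => intro hs; exact absurd (clo_of_lam hs) (by rintro ⟨⟩)
  | inert hi ih => intro hs; exact Is.inert (ih hs)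
  | redex hn hi ihn ihi =>
    intro hs
    obtain ⟨a, c, rfl⟩ := is_true_app hi
    cases hs with
    | root hr =>
      cases hr
      exact Is.essub hn hi
    | appL hl => cases clo_of_lam hl
    | appR hr => exact Is.redex hn (ihi hr)
  | essub hn hi ihn ihi =>
    intro hs
    cases hs with
    | root hr => cases hr
    | subL hl => exact Is.essub (ihn hl) hi
    | subR hr => exact Is.essub hn (ihi hr)

/-- A generic root relation that fires only on explicit substitutions whose
argument is not an application never fires inside an `Is`-term. -/
theorem noCloE {R : VTm → VTm → Prop}
    (hR' : ∀ s w, R s w → ∃ a c, s = .sub a c ∧ ∀ p q, c ≠ .app p q) :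
    ∀ {b t u}, Is b t → ¬ Clo R t u := by
  intro b t u h
  induction h generalizing u with
  | varVal hv =>
    intro hs
    cases hs with
    | root hr => obtain ⟨a, c, h1, -⟩ := hR' _ _ hr; cases h1
    | appL hl => obtain ⟨a, c, h1, -⟩ := hR' _ _ (clo_of_var hl); cases h1
    | appR hr => obtain ⟨a, c, h1, -⟩ := hR' _ _ (clo_of_val hv hr); cases hv <;> cases h1
  | varI hi ih =>
    intro hs
    cases hs with
    | root hr => obtain ⟨a, c, h1, -⟩ := hR' _ _ hr; cases h1
    | appL hl => obtain ⟨a, c, h1, -⟩ := hR' _ _ (clo_of_var hl); cases h1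
    | appR hr => exact ih hr
  | appN hi hn ihI ihN =>
    intro hs
    obtain ⟨a, c, rfl⟩ := is_true_app hi
    cases hs with
    | root hr => obtain ⟨a', c', h1, -⟩ := hR' _ _ hr; cases h1
    | appL hl => exact ihI hl
    | appR hr => exact ihN hr
  | var => intro hs; obtain ⟨a, c, h1, -⟩ := hR' _ _ (clo_of_var hs); cases h1
  | lam => intro hs; obtain ⟨a, c, h1, -⟩ := hR' _ _ (clo_of_lam hs); cases h1
  | inert hi ih => exact ih
  | redex hn hi ihn ihi =>
    intro hs
    cases hs with
    | root hr => obtain ⟨a, c, h1, -⟩ := hR' _ _ hr; cases h1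
    | appL hl => obtain ⟨a, c, h1, -⟩ := hR' _ _ (clo_of_lam hl); cases h1
    | appR hr => exact ihi hr
  | essub hn hi ihn ihi =>
    intro hs
    cases hs with
    | root hr =>
      obtain ⟨a, c, h1, h2⟩ := hR' _ _ hr
      obtain ⟨p, q, rfl⟩ := is_true_app hi
      cases h1
      exact h2 p q rfl
    | subL hl => exact ihn hl
    | subR hr => exact ihi hr

theorem rootEAbs_shape : ∀ s w, RootEAbs s w → ∃ a c, s = .sub a c ∧ ∀ p q, c ≠ .app p q := by
  intro s w h
  cases h with
  | beta => exact ⟨_, _, rfl, by intro p q h; cases h⟩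
  | under => exact ⟨_, _, rfl, by intro p q h; cases h⟩

theorem rootEVar_shape : ∀ s w, RootEVar s w → ∃ a c, s = .sub a c ∧ ∀ p q, c ≠ .app p q := by
  intro s w h
  cases h with
  | beta => exact ⟨_, _, rfl, by intro p q h; cases h⟩
  | under => exact ⟨_, _, rfl, by intro p q h; cases h⟩

theorem noStepE {b t u} (h : Is b t) : ¬ StepE t u := by
  rintro (he | he)
  · exact noCloE rootEAbs_shape h he
  · exact noCloE rootEVar_shape h he

/-- Every ES-free shuffling-normal term is in the grammar. -/
theorem toIs : ∀ (t : VTm), NoES t →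
    (∀ u, ¬ (StepBVb t u ∨ StepSig t u)) → Is false t
  | .var k, _, _ => Is.var
  | .lam _, _, _ => Is.lam
  | .sub _ _, hE, _ => hE.elim
  | .app a b, hE, hn => by
    have hEa : NoES a := hE.1
    have hEb : NoES b := hE.2
    have hnb : ∀ u, ¬ (StepBVb b u ∨ StepSig b u) :=
      fun u h => hn _ (h.imp BClo.appR BClo.appR)
    have ihb : Is false b := toIs b hEb hnb
    match a, hEa with
    | .var k, _ =>
      cases ihb with
      | var => exact Is.inert (Is.varVal IsVal.var)
      | lam => exact Is.inert (Is.varVal IsVal.lam)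
      | inert hi => exact Is.inert (Is.varI hi)
      | redex hn' hi =>
        exact absurd (hn _ (Or.inr (BClo.root (RootSig.sig3 IsVal.var)))) (by simp)
      | essub hn' hi => exact hEb.elim
    | .lam s, hEs =>
      have hns : ∀ u, ¬ (StepBVb s u ∨ StepSig s u) :=
        fun u h => hn _ (h.imp BClo.lamApp BClo.lamApp)
      cases ihb with
      | var => exact absurd (hn _ (Or.inl (BClo.root (RootBV.beta IsVal.var)))) (by simp)
      | lam => exact absurd (hn _ (Or.inl (BClo.root (RootBV.beta IsVal.lam)))) (by simp)
      | inert hi => exact Is.redex (toIs s hEs hns) hi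
      | redex hn' hi =>
        exact absurd (hn _ (Or.inr (BClo.root (RootSig.sig3 IsVal.lam)))) (by simp)
      | essub hn' hi => exact hEb.elim
    | .app p q, hEa =>
      have hna : ∀ u, ¬ (StepBVb (VTm.app p q) u ∨ StepSig (VTm.app p q) u) :=
        fun u h => hn _ (h.imp BClo.appL BClo.appL)
      have iha : Is false (VTm.app p q) := toIs (VTm.app p q) hEa hna
      cases iha with
      | inert hi => exact Is.inert (Is.appN hi ihb)
      | redex hn' hi =>
        exact absurd (hn _ (Or.inr (BClo.root RootSig.sig1))) (by simp)
    | .sub _ _, hEa => exact hEa.elim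

end ShufAux

open ShufAux

/-- if an ES-free term is normal for the shuffling calculus
(no balanced βv-steps and no shuffling steps), then its m-normal form is
vsub-normal. -/
theorem shuf_normal_mnf_vsub_normal (t mt : VTm) (ht : NoES t)
    (hn : ∀ u, ¬ (StepBVb t u ∨ StepSig t u))
    (hmt : MNF t mt) :
    ∀ u, ¬ StepVsub mt u := by
  have h0 : Is false t := toIs t ht hn
  obtain ⟨hr, hnf⟩ := hmt
  have h1 : Is false mt := by
    clear hnf
    induction hr with
    | refl => exact h0
    | tail _ hst ih => exact pres ih hst
  rintro u (hm | he)
  · exact hnf u hm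
  · exact noStepE h1 he
end
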